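/- arXiv:0911.1283 — 4 statements merged into one kernel-verified Lean document; each statement's English description precedes it below -/
import Mathlib

section
/- Let B be a centered ellipsoid in a real separable Hilbert space H with finite k-content |B|_k. Then there is a constant C_k depending only on k such that for all y_1, …, y_k ∈ B, det(0, y_1, …, y_k) ≤ C_k |B|_k. -/
open MeasureTheory
open scoped ENNReal BigOperators RealInnerProductSpace

noncomputable section

/-- `det(0, y₁, …, y_k)`: the square root of the Gram determinant of `y₁,…,y_k`,
i.e. `k!` times the `k`-dimensional volume of the simplex with vertices `0, y₁, …, y_k`. -/
noncomputable def vol0 {H : Type*} [NormedAddCommGroup H] [InnerProductSpace ℝ H]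
    {k : ℕ} (y : Fin k → H) : ℝ :=
  Real.sqrt (Matrix.det (Matrix.of fun i j => ⟪y i, y j⟫))

/-- A centered ellipsoid in `H`: the data of a countable orthonormal basis `ω`
together with lengths `ℓ i ∈ [0, ∞]`. -/
structure CenteredEllipsoid (H : Type*) [NormedAddCommGroup H] [InnerProductSpace ℝ H] where
  ι : Type
  count : Countable ι
  ω : ι → H
  orth : Orthonormal ℝ ω
  dense_span : (Submodule.span ℝ (Set.range ω)).topologicalClosure = ⊤
  ℓ : ι → ℝ≥0∞

/-- The set of points of a centered ellipsoid: `{x : Σᵢ |⟨x, ωᵢ⟩|²/ℓᵢ² ≤ 1}`. -/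
def CenteredEllipsoid.set {H : Type*} [NormedAddCommGroup H] [InnerProductSpace ℝ H]
    (B : CenteredEllipsoid H) : Set H :=
  {x | ∑' i, ((‖⟪x, B.ω i⟫‖₊ : ℝ≥0∞)) ^ 2 / (B.ℓ i) ^ 2 ≤ 1}

/-- The `k`-content of a centered ellipsoid: the supremum of `ℓ_{i₁} ⋯ ℓ_{i_k}`
over all choices of `k` distinct indices. -/
def CenteredEllipsoid.content {H : Type*} [NormedAddCommGroup H] [InnerProductSpace ℝ H]
    (B : CenteredEllipsoid H) (k : ℕ) : ℝ≥0∞ :=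
  ⨆ s : Fin k ↪ B.ι, ∏ j, B.ℓ (s j)

end

/-!
Truncate the coordinates `a i m = ⟪y i, ω m⟫` to a finite set `F` of indices and expand the
Gram determinant of the truncations multilinearly in its rows: it becomes
`∑ r, (∏ i, a i (r i)) * det (a j (r i))`, where only injective `r` contribute. With
`b i m = a i m / ℓ m`, so that `∑ m, b i m ^ 2 ≤ 1`, each term is at most
`|B|_k ^ 2 * ∑ σ, ∏ i, |b i (r i)| * |b (σ⁻¹ i) (r i)|`, and the sum over `r` then factors into
products of sums `∑ m, |b i m| * |b (σ⁻¹ i) m| ≤ 1`. So every truncated Gram determinant is at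
most `k! * |B|_k ^ 2`; by Parseval they converge to the Gram determinant, and `C_k = √k!`.
-/

open Finset Matrix Equiv Filter Topology

namespace Matrix

variable {R : Type*} [CommRing R] {n ι : Type*} [Fintype n] [DecidableEq n]

theorem det_of_sum_mul_eq_sum (F : Finset ι) (a : n → ι → R) (c : ι → n → R) :
    det (of fun i j => ∑ m ∈ F, a i m * c m j) =
      ∑ r ∈ Fintype.piFinset fun _ => F, (∏ i, a i (r i)) * det (of fun i j => c (r i) j) := by
  have h := (detRowAlternating : (n → R) [⋀^n]→ₗ[R] R).toMultilinearMap.map_sum_finset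
    (fun i m => a i m • c m) fun _ => F
  simp only [AlternatingMap.coe_multilinearMap, MultilinearMap.map_smul_univ, smul_eq_mul] at h
  refine Eq.trans ?_ (h.trans rfl)
  congr 1
  ext i j
  simp [Finset.sum_apply]

theorem abs_det_le_sum_abs_prod {R : Type*} [CommRing R] [LinearOrder R] [IsStrictOrderedRing R]
    (M : Matrix n n R) : |M.det| ≤ ∑ σ : Perm n, |∏ i, M (σ i) i| := by
  rw [det_apply']
  refine (abs_sum_le_sum_abs _ _).trans (sum_le_sum fun σ _ => ?_)
  rw [abs_mul, abs_unit_intCast, one_mul]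

theorem det_of_sum_mul_self_le (F : Finset ι) (a b : n → ι → ℝ) (L : ℝ)
    (hb : ∀ i, ∑ m ∈ F, b i m ^ 2 ≤ 1)
    (hab : ∀ r : n → ι, Function.Injective r → |∏ i, a i (r i)| ≤ L * |∏ i, b i (r i)|) :
    det (of fun i j => ∑ m ∈ F, a i m * a j m) ≤ (Fintype.card n).factorial * L ^ 2 := by
  -- `σ⁻¹` is placed so that the sum of `X r σ` over `r` factors as a product over rows.
  set X : (n → ι) → Perm n → ℝ := fun r σ => ∏ i, |b i (r i)| * |b (σ⁻¹ i) (r i)|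
  have hterm : ∀ r : n → ι,
      (∏ i, a i (r i)) * det (of fun i j => a j (r i)) ≤ L ^ 2 * ∑ σ, X r σ := by
    intro r
    by_cases hr : Function.Injective r
    · have hdet :
          |det (of fun i j => a j (r i))| ≤ ∑ σ : Perm n, L * |∏ i, b i (r (σ i))| :=
        (abs_det_le_sum_abs_prod _).trans
          (sum_le_sum fun σ _ => hab (r ∘ σ) (hr.comp σ.injective))
      calc (∏ i, a i (r i)) * det (of fun i j => a j (r i))
          ≤ |∏ i, a i (r i)| * |det (of fun i j => a j (r i))| :=
            (le_abs_self _).trans (abs_mul _ _).le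
        _ ≤ (L * |∏ i, b i (r i)|) * ∑ σ : Perm n, L * |∏ i, b i (r (σ i))| :=
          mul_le_mul (hab r hr) hdet (abs_nonneg _) ((abs_nonneg _).trans (hab r hr))
        _ = L ^ 2 * ∑ σ, X r σ := by
          rw [mul_sum, mul_sum]
          refine sum_congr rfl fun σ _ => ?_
          have hσ : ∏ i, |b i (r (σ i))| = ∏ i, |b (σ⁻¹ i) (r i)| := by
            simpa using Equiv.prod_comp σ fun i => |b (σ⁻¹ i) (r i)|
          simp only [X, abs_prod, prod_mul_distrib, hσ]
          ring
    · obtain ⟨i, i', hri, hii'⟩ := Function.not_injective_iff.mp hr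
      rw [det_zero_of_row_eq hii' (funext fun j => by simp [hri]), mul_zero]
      positivity
  have hX : ∀ σ : Perm n, ∑ r ∈ Fintype.piFinset fun _ => F, X r σ ≤ 1 := by
    intro σ
    rw [sum_prod_piFinset F fun i m => |b i m| * |b (σ⁻¹ i) m|]
    refine prod_le_one (fun i _ => by positivity) fun i _ => ?_
    calc ∑ m ∈ F, |b i m| * |b (σ⁻¹ i) m| ≤ ∑ m ∈ F, (b i m ^ 2 + b (σ⁻¹ i) m ^ 2) / 2 := by
          refine sum_le_sum fun m _ => ?_
          have h := two_mul_le_add_sq |b i m| |b (σ⁻¹ i) m|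
          rw [sq_abs, sq_abs] at h
          linarith
      _ ≤ 1 := by
          rw [← sum_div, sum_add_distrib]
          linarith [hb i, hb (σ⁻¹ i)]
  calc det (of fun i j => ∑ m ∈ F, a i m * a j m)
      = ∑ r ∈ Fintype.piFinset fun _ => F, (∏ i, a i (r i)) * det (of fun i j => a j (r i)) :=
        det_of_sum_mul_eq_sum F a fun m j => a j m
    _ ≤ ∑ r ∈ Fintype.piFinset fun _ => F, L ^ 2 * ∑ σ, X r σ := sum_le_sum fun r _ => hterm r
    _ = L ^ 2 * ∑ σ, ∑ r ∈ Fintype.piFinset fun _ => F, X r σ := by rw [← mul_sum, sum_comm]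
    _ ≤ L ^ 2 * ∑ _σ : Perm n, 1 := by gcongr with σ; exact hX σ
    _ = (Fintype.card n).factorial * L ^ 2 := by simp [Fintype.card_perm, mul_comm]

end Matrix

theorem HilbertBasis.tendsto_det_sum_inner_mul_inner {ι E n : Type*} [NormedAddCommGroup E]
    [InnerProductSpace ℝ E] [Fintype n] [DecidableEq n] (b : HilbertBasis ι ℝ E) (y : n → E) :
    Tendsto (fun F : Finset ι => det (of fun i j => ∑ m ∈ F, ⟪y i, b m⟫ * ⟪y j, b m⟫)) atTop
      (𝓝 (det (of fun i j => ⟪y i, y j⟫))) := by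
  refine (continuous_id.matrix_det.tendsto _).comp (tendsto_pi_nhds.mpr fun i =>
    tendsto_pi_nhds.mpr fun j => ?_)
  have h := b.hasSum_inner_mul_inner (y i) (y j)
  simp only [real_inner_comm (y j) (b _)] at h
  exact h

namespace CenteredEllipsoid

variable {H : Type*} [NormedAddCommGroup H] [InnerProductSpace ℝ H] (B : CenteredEllipsoid H)

theorem inner_eq_zero_of_ℓ_eq_zero {x : H} (hx : x ∈ B.set) {m : B.ι} (h0 : B.ℓ m = 0) :
    ⟪x, B.ω m⟫ = 0 := by
  by_contra hne
  have hm := (ENNReal.le_tsum m).trans hx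
  rw [h0, zero_pow two_ne_zero, ENNReal.div_zero (by simpa using hne)] at hm
  exact absurd hm (by simp)

theorem sum_sq_inner_div_le_one {x : H} (hx : x ∈ B.set) (F : Finset B.ι) :
    ∑ m ∈ F, (⟪x, B.ω m⟫ / (B.ℓ m).toReal) ^ 2 ≤ 1 := by
  have hterm : ∀ m, ENNReal.ofReal ((⟪x, B.ω m⟫ / (B.ℓ m).toReal) ^ 2)
      ≤ (‖⟪x, B.ω m⟫‖₊ : ℝ≥0∞) ^ 2 / B.ℓ m ^ 2 := by
    intro m
    rcases eq_or_ne (B.ℓ m) 0 with h0 | h0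
    · simp [h0]
    rcases eq_or_ne (B.ℓ m) ∞ with htop | htop
    · simp [htop]
    rw [div_pow, ENNReal.ofReal_div_of_pos (pow_pos (ENNReal.toReal_pos h0 htop) 2), ← sq_abs,
      ENNReal.ofReal_pow (abs_nonneg _), ENNReal.ofReal_pow ENNReal.toReal_nonneg,
      ENNReal.ofReal_toReal htop, ← Real.enorm_eq_ofReal_abs]
    rfl
  rw [← ENNReal.ofReal_le_one, ENNReal.ofReal_sum_of_nonneg fun _ _ => sq_nonneg _]
  exact (sum_le_sum fun m _ => hterm m).trans ((ENNReal.sum_le_tsum F).trans hx)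

/-- `(B.ℓ m).toReal` is `0` when `B.ℓ m` is `0` or `∞`. Zero lengths kill the coordinate, and an
infinite length among nonzero ones would make the content infinite. -/
theorem abs_prod_inner_le {k : ℕ} (hfin : B.content k ≠ ∞) {y : Fin k → H}
    (hy : ∀ i, y i ∈ B.set) {r : Fin k → B.ι} (hr : Function.Injective r) :
    |∏ i, ⟪y i, B.ω (r i)⟫|
      ≤ (B.content k).toReal * |∏ i, ⟪y i, B.ω (r i)⟫ / (B.ℓ (r i)).toReal| := by
  have hle : ∏ i, B.ℓ (r i) ≤ B.content k :=
    le_iSup (fun s : Fin k ↪ B.ι => ∏ i, B.ℓ (s i)) ⟨r, hr⟩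
  by_cases h0 : ∃ i, B.ℓ (r i) = 0
  · obtain ⟨i, hi⟩ := h0
    rw [prod_eq_zero (mem_univ i) (B.inner_eq_zero_of_ℓ_eq_zero (hy i) hi), abs_zero]
    positivity
  rw [not_exists] at h0
  have htop : ∀ i, B.ℓ (r i) ≠ ∞ := fun i hi =>
    hfin (top_unique (hle.trans' (WithTop.prod_eq_top (mem_univ i) hi fun j _ => h0 j).ge))
  calc |∏ i, ⟪y i, B.ω (r i)⟫|
      = (∏ i, B.ℓ (r i)).toReal * |∏ i, ⟪y i, B.ω (r i)⟫ / (B.ℓ (r i)).toReal| := by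
        rw [ENNReal.toReal_prod, ← abs_of_nonneg (prod_nonneg fun i _ => ENNReal.toReal_nonneg),
          ← abs_mul, ← prod_mul_distrib]
        congr 1
        refine prod_congr rfl fun i _ => (mul_div_cancel₀ _ ?_).symm
        exact ENNReal.toReal_ne_zero.mpr ⟨h0 i, htop i⟩
    _ ≤ (B.content k).toReal * |∏ i, ⟪y i, B.ω (r i)⟫ / (B.ℓ (r i)).toReal| := by
        gcongr

end CenteredEllipsoid

theorem stmt5_general (k : ℕ) :
    ∃ C : ℝ, 0 < C ∧
      ∀ (H : Type) [NormedAddCommGroup H] [InnerProductSpace ℝ H]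
        [CompleteSpace H] [SecondCountableTopology H]
        (B : CenteredEllipsoid H), B.content k ≠ ∞ →
        ∀ y : Fin k → H, (∀ i, y i ∈ B.set) →
          vol0 y ≤ C * (B.content k).toReal := by
  refine ⟨√(k.factorial : ℝ), by positivity, fun H _ _ _ _ B hfin y hy => ?_⟩
  set L := (B.content k).toReal
  have hgram : det (of fun i j => ⟪y i, y j⟫) ≤ k.factorial * L ^ 2 := by
    refine le_of_tendsto
      ((HilbertBasis.mk B.orth B.dense_span.ge).tendsto_det_sum_inner_mul_inner y)
      (Eventually.of_forall fun F => ?_)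
    simpa using det_of_sum_mul_self_le F _ _ L (fun i => B.sum_sq_inner_div_le_one (hy i) F)
      fun r hr => B.abs_prod_inner_le hfin hy hr
  calc vol0 y ≤ √(k.factorial * L ^ 2) := Real.sqrt_le_sqrt hgram
    _ = √(k.factorial : ℝ) * L := by
      rw [Real.sqrt_mul (by positivity), Real.sqrt_sq ENNReal.toReal_nonneg]

theorem stmt5 (k : ℕ) (hk : 0 < k) :
    ∃ C : ℝ, 0 < C ∧
      ∀ (H : Type) [NormedAddCommGroup H] [InnerProductSpace ℝ H]
        [CompleteSpace H] [SecondCountableTopology H]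
        (B : CenteredEllipsoid H), B.content k ≠ ∞ →
        ∀ y : Fin k → H, (∀ i, y i ∈ B.set) →
          vol0 y ≤ C * (B.content k).toReal :=
  stmt5_general k
end

section
/- Let Q be a d × d real matrix and let |Q|_k denote the reciprocal of the product of the k smallest eigenvalues of (Q*Q)^{1/2}. Then there is a constant C_k such that for all y_1, …, y_k ∈ ℝ^d, det(0, y_1, …, y_k) ≤ C_k |Q|_k ∏_{j=1}^k ‖Q y_j‖. -/
/-!
Let `Z` be the matrix with columns `y j`, so that `vol0 y ^ 2 = det (Zᵀ Z)`, while Hadamard's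
inequality gives `det (Zᵀ (QᵀQ) Z) ≤ ∏ ‖Q y j‖ ^ 2`. Diagonalising `QᵀQ = U Λ Uᵀ` and putting
`W = Uᵀ Z`, the Cauchy–Binet formula expands `det (Wᵀ Λ W)` as the sum over `k`-subsets `S` of
`(∏_{i ∈ S} λᵢ) det (W_S) ^ 2`, and `det (Wᵀ W) = det (Zᵀ Z)` as the same sum without the weights.
Every weight is at least `|Q|_k⁻²`, so the theorem holds with `C_k = 1`.
-/

open MeasureTheory
open scoped ENNReal BigOperators RealInnerProductSpace

/-- `|Q|_k`: the reciprocal of the product of the `k` smallest singular values of `Q`,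
i.e. of the `k` smallest eigenvalues of `(Q*Q)^{1/2}`.  Since all singular values of an
invertible `Q` are positive, the product of the `k` smallest equals the infimum over
choices of `k` distinct indices of the product of the selected singular values. -/
noncomputable def QkInv (d k : ℕ) (Q : Matrix (Fin d) (Fin d) ℝ) : ℝ :=
  (⨅ s : Fin k ↪ Fin d, ∏ j, Real.sqrt
      ((Matrix.posSemidef_conjTranspose_mul_self Q).isHermitian.eigenvalues (s j)))⁻¹

open Finset Equiv Matrix

namespace Matrix

section CauchyBinet

variable {R : Type*} [CommRing R] {m n : Type*} [Fintype m] [DecidableEq m]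

theorem det_submatrix_id_eq_zero_of_not_injective (A : Matrix m n R) {p : m → n}
    (hp : ¬ Function.Injective p) : (A.submatrix id p).det = 0 := by
  rw [← det_transpose, transpose_submatrix]
  exact detRowAlternating.map_eq_zero_of_not_injective _ fun h => hp fun i j hij =>
    h (funext fun l => by simp [hij])

variable [Fintype n]

theorem det_mul_eq_sum_prod_mul_det_submatrix (A : Matrix m n R) (B : Matrix n m R) :
    (A * B).det = ∑ p : m → n, (∏ i, B (p i) i) * (A.submatrix id p).det := by
  have hrows : (A * B)ᵀ = fun i => ∑ j, B j i • Aᵀ j := by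
    ext i l
    simp [mul_apply, Finset.sum_apply, mul_comm]
  rw [← det_transpose, det, hrows]
  refine (detRowAlternating.toMultilinearMap.map_sum fun i j => B j i • Aᵀ j).trans ?_
  refine sum_congr rfl fun p _ => ?_
  rw [MultilinearMap.map_smul_univ, smul_eq_mul, ← det_transpose, transpose_submatrix]
  rfl

theorem det_mul_eq_sum_embedding (A : Matrix m n R) (B : Matrix n m R) :
    (A * B).det = ∑ e : m ↪ n, (∏ i, B (e i) i) * (A.submatrix id e).det := by
  rw [det_mul_eq_sum_prod_mul_det_submatrix]
  refine (Fintype.sum_of_injective _ DFunLike.coe_injective _ _ (fun p hp => ?_) fun _ => rfl).symm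
  rw [det_submatrix_id_eq_zero_of_not_injective A fun hinj => hp ⟨⟨p, hinj⟩, rfl⟩, mul_zero]

/-- **Cauchy–Binet formula**, summed over injections `m ↪ n` rather than over subsets of `n`,
which counts every subset `(card m)!` times. -/
theorem factorial_card_mul_det_mul (A : Matrix m n R) (B : Matrix n m R) :
    ((Fintype.card m).factorial : R) * (A * B).det =
      ∑ e : m ↪ n, (A.submatrix id e).det * (B.submatrix e id).det := by
  set F : (m ↪ n) → R := fun e => (∏ i, B (e i) i) * (A.submatrix id e).det
  have hperm (e : m ↪ n) : ∑ σ : Perm m, F (σ.toEmbedding.trans e) =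
      (A.submatrix id e).det * (B.submatrix e id).det := by
    have hsub (σ : Perm m) :
        A.submatrix id (σ.toEmbedding.trans e) = (A.submatrix id e).submatrix id σ := rfl
    simp only [F, hsub, det_permute', det_apply' (B.submatrix e id), mul_sum]
    refine sum_congr rfl fun σ _ => ?_
    simp only [submatrix_apply, id, Function.Embedding.trans_apply, Equiv.coe_toEmbedding]
    ring
  calc ((Fintype.card m).factorial : R) * (A * B).det
      = ∑ _σ : Perm m, ∑ e, F e := by
        rw [det_mul_eq_sum_embedding, sum_const, card_univ, Fintype.card_perm, nsmul_eq_mul]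
    _ = ∑ σ : Perm m, ∑ e, F (σ.toEmbedding.trans e) := sum_congr rfl fun σ _ =>
        (Fintype.sum_equiv (Equiv.embeddingCongr σ.symm (Equiv.refl n)) _ _ fun e => by
          congr 1).symm
    _ = _ := by rw [sum_comm]; exact sum_congr rfl fun e _ => hperm e

theorem factorial_card_mul_det_transpose_mul_diagonal_mul [DecidableEq n] (Z : Matrix n m R)
    (w : n → R) :
    ((Fintype.card m).factorial : R) * (Zᵀ * diagonal w * Z).det =
      ∑ e : m ↪ n, (∏ i, w (e i)) * (Z.submatrix e id).det ^ 2 := by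
  rw [Matrix.mul_assoc, factorial_card_mul_det_mul]
  refine sum_congr rfl fun e _ => ?_
  have hsub : (diagonal w * Z).submatrix e id = diagonal (w ∘ e) * Z.submatrix e id := by
    ext i j
    simp [diagonal_mul]
  rw [hsub, det_mul, det_diagonal, ← transpose_submatrix, det_transpose]
  simp only [Function.comp_apply]
  ring

theorem mul_det_transpose_mul_self_le_det_transpose_mul_diagonal_mul [LinearOrder R]
    [IsStrictOrderedRing R] [DecidableEq n] {w : n → R} {c : R}
    (hc : ∀ e : m ↪ n, c ≤ ∏ i, w (e i)) (Z : Matrix n m R) :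
    c * (Zᵀ * Z).det ≤ (Zᵀ * diagonal w * Z).det := by
  have hZZ := factorial_card_mul_det_transpose_mul_diagonal_mul Z (fun _ => 1)
  simp only [diagonal_one, Matrix.mul_one, prod_const_one, one_mul] at hZZ
  refine le_of_mul_le_mul_left ?_ (Nat.cast_pos.mpr (Fintype.card m).factorial_pos)
  rw [mul_left_comm, hZZ, factorial_card_mul_det_transpose_mul_diagonal_mul, mul_sum]
  exact sum_le_sum fun e _ => mul_le_mul_of_nonneg_right (hc e) (sq_nonneg _)

end CauchyBinet

section Hermitian

variable {m n : Type*} [Fintype m] [Fintype n] [DecidableEq m] [DecidableEq n]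

theorem IsHermitian.mul_det_transpose_mul_self_le_det_transpose_mul_mul {A : Matrix n n ℝ}
    (hA : A.IsHermitian) {c : ℝ} (hc : ∀ e : m ↪ n, c ≤ ∏ i, hA.eigenvalues (e i))
    (Z : Matrix n m ℝ) :
    c * (Zᵀ * Z).det ≤ (Zᵀ * A * Z).det := by
  set U : Matrix n n ℝ := (hA.eigenvectorUnitary : Matrix n n ℝ)
  have hUt : Uᵀ = star U := (conjTranspose_eq_transpose_of_trivial U).symm
  have hspec : A = U * diagonal hA.eigenvalues * Uᵀ := by
    conv_lhs => rw [hA.spectral_theorem]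
    simp [U, hUt]
  have hUU : U * Uᵀ = 1 := by rw [hUt]; exact Unitary.coe_mul_star_self _
  have hW : (Uᵀ * Z)ᵀ = Zᵀ * U := by rw [transpose_mul, transpose_transpose]
  calc c * (Zᵀ * Z).det = c * ((Uᵀ * Z)ᵀ * (Uᵀ * Z)).det := by
        rw [hW, Matrix.mul_assoc, ← Matrix.mul_assoc U, hUU, Matrix.one_mul]
    _ ≤ ((Uᵀ * Z)ᵀ * diagonal hA.eigenvalues * (Uᵀ * Z)).det :=
        mul_det_transpose_mul_self_le_det_transpose_mul_diagonal_mul hc (Uᵀ * Z)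
    _ = (Zᵀ * A * Z).det := by
        conv_rhs => rw [hspec]
        simp only [hW, Matrix.mul_assoc]

end Hermitian

section Hadamard

variable {n : Type*} [Fintype n] [DecidableEq n]

theorem PosSemidef.det_le_one_of_diag_eq_one {H : Matrix n n ℝ} (hH : H.PosSemidef)
    (hdiag : ∀ i, H i i = 1) : H.det ≤ 1 := by
  have htrace : ∑ i, hH.isHermitian.eigenvalues i = Fintype.card n := by
    simpa [trace, hdiag] using hH.isHermitian.trace_eq_sum_eigenvalues.symm
  -- `x ≤ exp (x - 1)` turns the product of the eigenvalues into the exponential of their sum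
  calc H.det = ∏ i, hH.isHermitian.eigenvalues i := by
        simpa using hH.isHermitian.det_eq_prod_eigenvalues
    _ ≤ ∏ i, Real.exp (hH.isHermitian.eigenvalues i - 1) :=
        prod_le_prod (fun i _ => hH.eigenvalues_nonneg i) fun i _ => by
          linarith [Real.add_one_le_exp (hH.isHermitian.eigenvalues i - 1)]
    _ = 1 := by simp [← Real.exp_sum, sum_sub_distrib, htrace]

theorem PosSemidef.det_le_prod_diag {G : Matrix n n ℝ} (hG : G.PosSemidef) :
    G.det ≤ ∏ i, G i i := by
  by_cases hdet : G.det = 0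
  · exact hdet ▸ prod_nonneg fun i _ => hG.diag_nonneg
  have hpos : ∀ i, 0 < G i i := fun i => (hG.posDef_iff_det_ne_zero.mpr hdet).diag_pos
  set s : n → ℝ := fun i => Real.sqrt (G i i)
  have hs : ∀ i, 0 < s i := fun i => Real.sqrt_pos.mpr (hpos i)
  have hnorm : (diagonal s⁻¹ * G * diagonal s⁻¹).PosSemidef := by
    simpa using hG.mul_mul_conjTranspose_same (diagonal s⁻¹)
  have hnorm_diag : ∀ i, (diagonal s⁻¹ * G * diagonal s⁻¹) i i = 1 := fun i => by
    simp only [diagonal_mul, mul_diagonal, Pi.inv_apply, s]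
    field_simp
    rw [Real.sq_sqrt (hpos i).le, div_self (hpos i).ne']
  have hdet_le := hnorm.det_le_one_of_diag_eq_one hnorm_diag
  rw [det_mul, det_mul, det_diagonal, Pi.inv_def, prod_inv_distrib] at hdet_le
  have hP : 0 < ∏ i, s i := prod_pos fun i _ => hs i
  have hdiag_prod : ∏ i, G i i = (∏ i, s i) ^ 2 := by
    simp [← prod_pow, s, Real.sq_sqrt (hpos _).le]
  calc G.det = (∏ i, s i) * ((∏ i, s i)⁻¹ * G.det * (∏ i, s i)⁻¹) * ∏ i, s i := by
        field_simp
    _ ≤ (∏ i, s i) * 1 * ∏ i, s i := by gcongr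
    _ = ∏ i, G i i := by rw [hdiag_prod]; ring

theorem det_gram_le_prod_norm_sq {E : Type*} [NormedAddCommGroup E] [InnerProductSpace ℝ E]
    (v : n → E) : (gram ℝ v).det ≤ ∏ i, ‖v i‖ ^ 2 := by
  simpa [gram_apply, real_inner_self_eq_norm_sq] using (posSemidef_gram ℝ v).det_le_prod_diag

end Hadamard

end Matrix

namespace EuclideanSpace

variable {m n l : Type*} [Fintype n] [Fintype l]

theorem gram_eq_transpose_mul_self (y : m → EuclideanSpace ℝ n) :
    gram ℝ y = (of fun i j => y j i)ᵀ * of fun i j => y j i :=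
  gram_eq_conjTranspose_mul (EuclideanSpace.basisFun n ℝ) y

theorem gram_toLp_mulVec (Q : Matrix l n ℝ) (y : m → EuclideanSpace ℝ n) :
    gram ℝ (fun j => WithLp.toLp 2 (Q *ᵥ y j)) =
      (of fun i j => y j i)ᵀ * (Qᴴ * Q) * of fun i j => y j i := by
  have hcols : (of fun i j => WithLp.toLp 2 (Q *ᵥ y j) i) = Q * of fun i j => y j i := by
    ext i j
    simp [mul_apply, mulVec, dotProduct]
  rw [gram_eq_transpose_mul_self, hcols, transpose_mul, conjTranspose_eq_transpose_of_trivial]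
  simp only [Matrix.mul_assoc]

end EuclideanSpace

theorem QkInv_inv_sq_le (d k : ℕ) (Q : Matrix (Fin d) (Fin d) ℝ) (e : Fin k ↪ Fin d) :
    (QkInv d k Q)⁻¹ ^ 2 ≤
      ∏ j, (posSemidef_conjTranspose_mul_self Q).isHermitian.eigenvalues (e j) := by
  have hnonneg := (posSemidef_conjTranspose_mul_self Q).eigenvalues_nonneg
  rw [QkInv, inv_inv]
  calc _ ≤ (∏ j, √((posSemidef_conjTranspose_mul_self Q).isHermitian.eigenvalues (e j))) ^ 2 := by
        gcongr
        · exact Real.iInf_nonneg fun s => prod_nonneg fun j _ => Real.sqrt_nonneg _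
        · exact ciInf_le (Set.finite_range _).bddBelow e
    _ = _ := by simp only [← prod_pow, Real.sq_sqrt (hnonneg _)]

theorem QkInv_pos {d k : ℕ} (hkd : k ≤ d) {Q : Matrix (Fin d) (Fin d) ℝ} (hQ : IsUnit Q.det) :
    0 < QkInv d k Q := by
  have hA : (Qᴴ * Q).PosDef := .conjTranspose_mul_self Q <|
    mulVec_injective_iff_isUnit.mpr ((isUnit_iff_isUnit_det Q).mpr hQ)
  have : Nonempty (Fin k ↪ Fin d) := ⟨Fin.castLEEmb hkd⟩
  obtain ⟨e, he⟩ := exists_eq_ciInf_of_finite (f := fun e : Fin k ↪ Fin d =>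
    ∏ j, √((posSemidef_conjTranspose_mul_self Q).isHermitian.eigenvalues (e j)))
  rw [QkInv, ← he, inv_pos]
  exact prod_pos fun j _ => Real.sqrt_pos.mpr (hA.eigenvalues_pos _)

theorem stmt6_general (k : ℕ) :
    ∃ C : ℝ, 0 < C ∧
      ∀ (d : ℕ), k ≤ d →
        ∀ (Q : Matrix (Fin d) (Fin d) ℝ), IsUnit Q.det →
          ∀ y : Fin k → EuclideanSpace ℝ (Fin d),
            vol0 y ≤ C * QkInv d k Q *
              ∏ j, ‖(show EuclideanSpace ℝ (Fin d) from WithLp.toLp 2 (Q.mulVec (y j)))‖ := by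
  refine ⟨1, one_pos, fun d hkd Q hQ y => ?_⟩
  set q := QkInv d k Q
  have hq : 0 < q := QkInv_pos hkd hQ
  set Qy : Fin k → EuclideanSpace ℝ (Fin d) := fun j => WithLp.toLp 2 (Q *ᵥ y j)
  have hdistort : q⁻¹ ^ 2 * (gram ℝ y).det ≤ (gram ℝ Qy).det := by
    rw [EuclideanSpace.gram_eq_transpose_mul_self, EuclideanSpace.gram_toLp_mulVec]
    exact (posSemidef_conjTranspose_mul_self Q).isHermitian
      |>.mul_det_transpose_mul_self_le_det_transpose_mul_mul (QkInv_inv_sq_le d k Q) _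
  have hgram : (gram ℝ y).det ≤ (q * ∏ j, ‖Qy j‖) ^ 2 := by
    calc (gram ℝ y).det = q ^ 2 * (q⁻¹ ^ 2 * (gram ℝ y).det) := by field_simp
      _ ≤ q ^ 2 * ∏ j, ‖Qy j‖ ^ 2 := by
        gcongr
        exact hdistort.trans (det_gram_le_prod_norm_sq Qy)
      _ = (q * ∏ j, ‖Qy j‖) ^ 2 := by rw [mul_pow, prod_pow]
  rw [one_mul, vol0, Real.sqrt_le_iff]
  exact ⟨by positivity, hgram⟩

theorem stmt6 (k : ℕ) (hk : 0 < k) :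
    ∃ C : ℝ, 0 < C ∧
      ∀ (d : ℕ), k ≤ d →
        ∀ (Q : Matrix (Fin d) (Fin d) ℝ), IsUnit Q.det →
          ∀ y : Fin k → EuclideanSpace ℝ (Fin d),
            vol0 y ≤ C * QkInv d k Q *
              ∏ j, ‖(show EuclideanSpace ℝ (Fin d) from WithLp.toLp 2 (Q.mulVec (y j)))‖ :=
  stmt6_general k
end

section
/- Let μ be a k-admissible Borel measure on H. Define F_{k,α}(y) = sup_B μ(y + B)/|B|_k^α, the supremum over all centered ellipsoids B. Then for any p ∈ (0, ∞), ‖F_{k, αp/(p+1)}‖_{L^∞(μ)} ≤ 2^{αk} ‖F_{k,α}‖_{p,∞}^{p/(p+1)}. In particular, if F_{k,α} lies in weak-L^p(μ) then μ is k-curved with exponent αp/(p+1). -/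
open MeasureTheory
open scoped ENNReal BigOperators RealInnerProductSpace

/-- `μ` is `k`-admissible: every affine `(k-1)`-dimensional subspace is `μ`-null. -/
def Admissible {H : Type*} [NormedAddCommGroup H] [InnerProductSpace ℝ H]
    [MeasurableSpace H] (k : ℕ) (μ : Measure H) : Prop :=
  ∀ s : AffineSubspace ℝ H, Module.finrank ℝ s.direction = k - 1 → μ (s : Set H) = 0

/-- The maximal function `F_{k,α}(y) = sup_B μ(y + B) / |B|_k^α`, the supremum taken
over all centered ellipsoids `B`. -/
noncomputable def Fka {H : Type} [NormedAddCommGroup H] [InnerProductSpace ℝ H]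
    [MeasurableSpace H] (k : ℕ) (α : ℝ) (μ : Measure H) (y : H) : ℝ≥0∞ :=
  ⨆ B : CenteredEllipsoid H, μ ((fun x => y + x) '' B.set) / (B.content k) ^ α

/-- The `p`-th power of the weak-`L^p(μ)` quasinorm:
`‖f‖_{p,∞}^p = sup_{λ>0} λ^p μ{y : f y > λ}`. -/
noncomputable def weakNormPow {H : Type} [NormedAddCommGroup H] [InnerProductSpace ℝ H]
    [MeasurableSpace H] (p : ℝ) (μ : Measure H) (f : H → ℝ≥0∞) : ℝ≥0∞ :=
  ⨆ lam : NNReal, (lam : ℝ≥0∞) ^ p * μ {y | (lam : ℝ≥0∞) < f y}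


/-!
If `z ∈ y + B` then `y + B ⊆ z + 2B` and `|2B|_k = 2^k |B|_k`, so `F_{k,α} ≥ m / (2^k |B|_k)^α`
on all of `y + B`, where `m = μ(y + B)`. The weak-`L^p` bound applied to the set `y + B` gives
`(m / (2^k |B|_k)^α)^p · m ≤ ‖F_{k,α}‖_{p,∞}^p`, that is `m^(p+1) ≤ ‖F_{k,α}‖_{p,∞}^p (2^k |B|_k)^(αp)`;
taking `(p+1)`-th roots is the claim. An ellipsoid of content `0` and positive measure would make
`F_{k,α} = ∞` on a set of positive measure, and ellipsoids of infinite content contribute nothing.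
-/

open scoped NNReal

namespace CenteredEllipsoid

variable {H : Type} [NormedAddCommGroup H] [InnerProductSpace ℝ H]

noncomputable def scale (B : CenteredEllipsoid H) (a : ℝ≥0∞) : CenteredEllipsoid H :=
  { B with ℓ := fun i => a * B.ℓ i }

theorem content_scale (B : CenteredEllipsoid H) (a : ℝ≥0∞) (k : ℕ) :
    (B.scale a).content k = a ^ k * B.content k := by
  change ⨆ s : Fin k ↪ B.ι, ∏ j, a * B.ℓ (s j) = _
  simp only [content, Finset.prod_mul_distrib, Finset.prod_const, Finset.card_univ,
    Fintype.card_fin, ENNReal.mul_iSup]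

theorem sub_mem_scale_two {B : CenteredEllipsoid H} {a b : H} (ha : a ∈ B.set)
    (hb : b ∈ B.set) : a - b ∈ (B.scale 2).set := by
  let q : H → B.ι → ℝ≥0∞ := fun x i => (‖⟪x, B.ω i⟫‖₊ : ℝ≥0∞) ^ 2
  have hterm (i : B.ι) :
      q (a - b) i / (2 * B.ℓ i) ^ 2 ≤ 2⁻¹ * (q a i / B.ℓ i ^ 2 + q b i / B.ℓ i ^ 2) := by
    have hsq : q (a - b) i ≤ 2 * (q a i + q b i) := by
      have hle : ‖⟪a - b, B.ω i⟫‖₊ ≤ ‖⟪a, B.ω i⟫‖₊ + ‖⟪b, B.ω i⟫‖₊ := by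
        rw [inner_sub_left]; exact nnnorm_sub_le _ _
      have h := (pow_le_pow_left₀ zero_le hle 2).trans add_sq_le
      simp only [q]; exact_mod_cast h
    calc q (a - b) i / (2 * B.ℓ i) ^ 2 ≤ 2 * (q a i + q b i) / (2 * (2 * B.ℓ i ^ 2)) := by
          rw [mul_pow, ← mul_assoc]; gcongr; norm_num
      _ = 2⁻¹ * (q a i / B.ℓ i ^ 2 + q b i / B.ℓ i ^ 2) := by
          rw [ENNReal.mul_div_mul_left _ _ two_ne_zero ENNReal.ofNat_ne_top,
            ENNReal.div_add_div_same, div_eq_mul_inv, div_eq_mul_inv,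
            ENNReal.mul_inv (Or.inl two_ne_zero) (Or.inl ENNReal.ofNat_ne_top), mul_left_comm]
  calc ∑' i, q (a - b) i / (2 * B.ℓ i) ^ 2
      ≤ ∑' i, 2⁻¹ * (q a i / B.ℓ i ^ 2 + q b i / B.ℓ i ^ 2) := ENNReal.tsum_le_tsum hterm
    _ = 2⁻¹ * (∑' i, q a i / B.ℓ i ^ 2 + ∑' i, q b i / B.ℓ i ^ 2) := by
        rw [ENNReal.tsum_mul_left, ENNReal.tsum_add]
    _ ≤ 2⁻¹ * (1 + 1) := by gcongr <;> assumption
    _ = 1 := by rw [one_add_one_eq_two, ENNReal.inv_mul_cancel two_ne_zero ENNReal.ofNat_ne_top]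

theorem image_add_subset_image_add_scale_two {B : CenteredEllipsoid H} {y z : H}
    (hz : z ∈ (y + ·) '' B.set) : (y + ·) '' B.set ⊆ (z + ·) '' (B.scale 2).set := by
  obtain ⟨b, hb, rfl⟩ := hz
  rintro _ ⟨x, hx, rfl⟩
  exact ⟨x - b, sub_mem_scale_two hx hb, add_add_sub_cancel y x b⟩

end CenteredEllipsoid

theorem ENNReal.le_rpow_mul_rpow_of_div_rpow_mul_le {m D W : ℝ≥0∞} {p : ℝ} (hp : 0 < p)
    (hD : D ≠ ⊤) (hW : W ≠ ⊤) (h : (m / D) ^ p * m ≤ W) :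
    m ≤ W ^ (1 / (p + 1)) * D ^ (p / (p + 1)) := by
  rcases eq_or_ne m 0 with rfl | hm
  · exact zero_le
  have hD0 : D ≠ 0 := by
    rintro rfl
    rw [ENNReal.div_zero hm, ENNReal.top_rpow_of_pos hp, ENNReal.top_mul hm] at h
    exact hW (top_le_iff.mp h)
  have hDp0 : D ^ p ≠ 0 := (ENNReal.rpow_pos (pos_iff_ne_zero.mpr hD0) hD).ne'
  have hDpt : D ^ p ≠ ⊤ := ENNReal.rpow_ne_top_of_nonneg hp.le hD
  have hpow : m ^ (p + 1) ≤ W * D ^ p := calc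
    m ^ (p + 1) = (m / D) ^ p * m * D ^ p := by
      rw [ENNReal.div_rpow_of_nonneg _ _ hp.le, mul_right_comm, ENNReal.div_mul_cancel hDp0 hDpt,
        ENNReal.rpow_add_of_nonneg _ _ hp.le zero_le_one, ENNReal.rpow_one]
    _ ≤ W * D ^ p := by gcongr
  have hp1 : 0 < p + 1 := by linarith
  rw [one_div, div_eq_mul_inv, ENNReal.rpow_mul D,
    ← ENNReal.mul_rpow_of_nonneg _ _ (inv_nonneg.mpr hp1.le)]
  exact (ENNReal.le_rpow_inv_iff hp1).mpr hpow

section MaximalFunction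

variable {H : Type} [NormedAddCommGroup H] [InnerProductSpace ℝ H] [MeasurableSpace H]
  {μ : Measure H}

theorem rpow_mul_measure_le_weakNormPow {p : ℝ} (hp : 0 < p) {f : H → ℝ≥0∞} {S : Set H}
    {t : ℝ≥0∞} (hf : ∀ x ∈ S, t ≤ f x) : t ^ p * μ S ≤ weakNormPow p μ f := by
  have hlt (r : ℝ≥0) (hr : (r : ℝ≥0∞) < t) : (r : ℝ≥0∞) ^ p * μ S ≤ weakNormPow p μ f :=
    (mul_le_mul_right (measure_mono fun x hx => hr.trans_le (hf x hx)) _).trans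
      (le_iSup (fun r : ℝ≥0 => (r : ℝ≥0∞) ^ p * μ {x | (r : ℝ≥0∞) < f x}) r)
  rcases eq_or_ne (μ S) 0 with h0 | h0
  · simp [h0]
  rcases eq_or_ne (μ S) ⊤ with htop | htop
  · rcases eq_or_ne t 0 with ht | ht
    · simp [ht, ENNReal.zero_rpow_of_pos hp]
    obtain ⟨r, hr0, hrt⟩ := ENNReal.lt_iff_exists_nnreal_btwn.mp (pos_iff_ne_zero.mpr ht)
    have h := hlt r hrt
    rw [htop, ENNReal.mul_top (ENNReal.rpow_pos hr0 ENNReal.coe_ne_top).ne'] at h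
    exact le_top.trans h
  rw [← ENNReal.le_div_iff_mul_le (Or.inl h0) (Or.inl htop), ← ENNReal.le_rpow_inv_iff hp]
  refine ENNReal.le_of_forall_nnreal_lt fun r hr => ?_
  rw [ENNReal.le_rpow_inv_iff hp, ENNReal.le_div_iff_mul_le (Or.inl h0) (Or.inl htop)]
  exact hlt r hr

theorem measure_div_le_Fka {k : ℕ} {α : ℝ} {y z : H} {B : CenteredEllipsoid H}
    (hz : z ∈ (y + ·) '' B.set) :
    μ ((y + ·) '' B.set) / (2 ^ k * B.content k) ^ α ≤ Fka k α μ z := by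
  rw [← B.content_scale]
  exact (ENNReal.div_le_div_right
    (measure_mono (CenteredEllipsoid.image_add_subset_image_add_scale_two hz)) _).trans
    (le_iSup (fun E : CenteredEllipsoid H => μ ((z + ·) '' E.set) / E.content k ^ α) (B.scale 2))

theorem measure_image_add_le {k : ℕ} {α p : ℝ} (hα : 0 ≤ α) (hp : 0 < p)
    (hW : weakNormPow p μ (Fka k α μ) ≠ ⊤) (y : H) {B : CenteredEllipsoid H}
    (hB : B.content k ≠ ⊤) :
    μ ((y + ·) '' B.set) ≤ ENNReal.ofReal (2 ^ (α * k)) *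
      weakNormPow p μ (Fka k α μ) ^ (1 / (p + 1)) * B.content k ^ (α * p / (p + 1)) := by
  have hweak : (μ ((y + ·) '' B.set) / (2 ^ k * B.content k) ^ α) ^ p * μ ((y + ·) '' B.set)
      ≤ weakNormPow p μ (Fka k α μ) :=
    rpow_mul_measure_le_weakNormPow hp fun _ hz => measure_div_le_Fka hz
  have hD : (2 ^ k * B.content k) ^ α ≠ ⊤ :=
    ENNReal.rpow_ne_top_of_nonneg hα (ENNReal.mul_ne_top (by simp) hB)
  have htwo : ((2 : ℝ≥0∞) ^ k) ^ (α * p / (p + 1)) ≤ ENNReal.ofReal (2 ^ (α * k)) := by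
    rw [mul_div_assoc, ← ENNReal.ofReal_ofNat, ← ENNReal.ofReal_pow zero_le_two,
      ENNReal.ofReal_rpow_of_nonneg (by positivity) (by positivity), ← Real.rpow_natCast,
      ← Real.rpow_mul zero_le_two]
    refine ENNReal.ofReal_le_ofReal (Real.rpow_le_rpow_of_exponent_le one_le_two ?_)
    have : p / (p + 1) ≤ 1 := (div_le_one (by linarith)).mpr (by linarith)
    nlinarith [mul_nonneg hα (Nat.cast_nonneg k : (0 : ℝ) ≤ k)]
  refine (ENNReal.le_rpow_mul_rpow_of_div_rpow_mul_le hp hD hW hweak).trans ?_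
  rw [← ENNReal.rpow_mul, ← mul_div_assoc, ENNReal.mul_rpow_of_nonneg _ _ (by positivity),
    ← mul_assoc, mul_comm (_ ^ (1 / (p + 1)))]
  gcongr

end MaximalFunction

theorem stmt12_general {H : Type} [NormedAddCommGroup H] [InnerProductSpace ℝ H]
    [MeasurableSpace H]
    (k : ℕ) (μ : Measure H) (α : ℝ) (hα : 0 < α)
    (p : ℝ) (hp : 0 < p) :
    essSup (Fka k (α * p / (p + 1)) μ) μ
        ≤ ENNReal.ofReal (2 ^ (α * k)) *
          (weakNormPow p μ (Fka k α μ)) ^ (1 / (p + 1))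
      ∧
    (weakNormPow p μ (Fka k α μ) ≠ ∞ →
      ∃ C : ℝ, 0 < C ∧
        ∀ (y : H) (B : CenteredEllipsoid H),
          μ ((fun x => y + x) '' B.set)
            ≤ ENNReal.ofReal C * (B.content k) ^ (α * p / (p + 1))) := by
  have hβ : 0 < α * p / (p + 1) := by positivity
  constructor
  · rcases eq_or_ne (weakNormPow p μ (Fka k α μ)) ⊤ with hW | hW
    · rw [hW, ENNReal.top_rpow_of_pos (by positivity), ENNReal.mul_top (by positivity)]
      exact le_top
    refine essSup_le_of_ae_le _ (ae_of_all _ fun y => iSup_le fun B => ?_)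
    rcases eq_or_ne (B.content k) ⊤ with hB | hB
    · rw [hB, ENNReal.top_rpow_of_pos hβ, ENNReal.div_top]
      exact zero_le
    exact ENNReal.div_le_of_le_mul (measure_image_add_le hα.le hp hW y hB)
  · intro hW
    set R := ENNReal.ofReal (2 ^ (α * k)) * weakNormPow p μ (Fka k α μ) ^ (1 / (p + 1))
    have hR : R ≠ ⊤ := ENNReal.mul_ne_top ENNReal.ofReal_ne_top
      (ENNReal.rpow_ne_top_of_nonneg (by positivity) hW)
    refine ⟨R.toReal + 1, by positivity, fun y B => ?_⟩
    rcases eq_or_ne (B.content k) ⊤ with hB | hB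
    · rw [hB, ENNReal.top_rpow_of_pos hβ,
        ENNReal.mul_top (ENNReal.ofReal_pos.mpr (by positivity)).ne']
      exact le_top
    refine (measure_image_add_le hα.le hp hW y hB).trans (mul_le_mul_left ?_ _)
    exact (ENNReal.le_ofReal_iff_toReal_le hR (by positivity)).mpr (by linarith)

theorem stmt12 {H : Type} [NormedAddCommGroup H] [InnerProductSpace ℝ H]
    [CompleteSpace H] [SecondCountableTopology H] [MeasurableSpace H] [BorelSpace H]
    (k : ℕ) (hk : 0 < k) (μ : Measure H) (α : ℝ) (hα : 0 < α)
    (hadm : Admissible k μ) (p : ℝ) (hp : 0 < p) :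
    essSup (Fka k (α * p / (p + 1)) μ) μ
        ≤ ENNReal.ofReal (2 ^ (α * k)) *
          (weakNormPow p μ (Fka k α μ)) ^ (1 / (p + 1))
      ∧
    (weakNormPow p μ (Fka k α μ) ≠ ∞ →
      ∃ C : ℝ, 0 < C ∧
        ∀ (y : H) (B : CenteredEllipsoid H),
          μ ((fun x => y + x) '' B.set)
            ≤ ENNReal.ofReal C * (B.content k) ^ (α * p / (p + 1))) :=
  stmt12_general k μ α hα p hp
end

section
/- Suppose nonnegative reals C_ε (defined for ε ∈ (0,1]) satisfy C_ε ≤ 1 for all ε and the recursive inequality C_ε ≤ K ε² + (1−ε)^k C_{ε/(1−ε)} for all ε ∈ (0,1) (with k ≥ 2 an integer and K ≥ 1). Then C_ε ≤ 2K ε for all ε ∈ (0,1]. -/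
open Set

/-- Induction along `ε ↦ ε / (1 - ε)`, which lowers `ε⁻¹` by exactly one and so reaches
`[1/2, 1]` after finitely many steps. -/
theorem Real.Ioc_zero_one_induction {P : ℝ → Prop} (base : ∀ ε ∈ Icc (1 / 2 : ℝ) 1, P ε)
    (step : ∀ ε ∈ Ioo (0 : ℝ) (1 / 2), P (ε / (1 - ε)) → P ε) :
    ∀ ε ∈ Ioc (0 : ℝ) 1, P ε := by
  have bounded : ∀ n : ℕ, ∀ ε ∈ Ioc (0 : ℝ) 1, ε⁻¹ ≤ n + 2 → P ε := by
    intro n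
    induction n with
    | zero =>
      rintro ε ⟨hε0, hε1⟩ hinv
      refine base ε ⟨?_, hε1⟩
      rw [inv_le_comm₀ hε0 (by norm_num)] at hinv
      norm_num at hinv ⊢
      linarith
    | succ n ih =>
      rintro ε ⟨hε0, hε1⟩ hinv
      rcases le_or_gt (1 / 2) ε with hhalf | hhalf
      · exact base ε ⟨hhalf, hε1⟩
      refine step ε ⟨hε0, hhalf⟩ (ih _ ⟨by apply div_pos <;> linarith, ?_⟩ ?_)
      · rw [div_le_one (by linarith)]
        linarith
      · have : (ε / (1 - ε))⁻¹ = ε⁻¹ - 1 := by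
          field_simp
        rw [this]
        push_cast at hinv
        linarith
  intro ε hε
  refine bounded ⌈ε⁻¹⌉₊ ε hε ?_
  linarith [Nat.le_ceil ε⁻¹]

/-- Since `(1 - ε)² · ε / (1 - ε) = ε (1 - ε)`, the bound at `ε / (1 - ε)` returns as
`2 K ε - K ε²` at `ε`. -/
theorem le_two_mul_mul_of_le_sq_add_pow_mul {k : ℕ} (hk : 2 ≤ k) {K ε c c' : ℝ} (hK : 0 ≤ K)
    (hε0 : 0 < ε) (hε1 : ε < 1) (hc : c ≤ K * ε ^ 2 + (1 - ε) ^ k * c')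
    (hc' : c' ≤ 2 * K * (ε / (1 - ε))) :
    c ≤ 2 * K * ε := by
  have h1ε : 0 < 1 - ε := by linarith
  calc c ≤ K * ε ^ 2 + (1 - ε) ^ k * c' := hc
    _ ≤ K * ε ^ 2 + (1 - ε) ^ k * (2 * K * (ε / (1 - ε))) := by gcongr
    _ ≤ K * ε ^ 2 + (1 - ε) ^ 2 * (2 * K * (ε / (1 - ε))) := by
      gcongr _ + ?_
      exact mul_le_mul_of_nonneg_right (pow_le_pow_of_le_one h1ε.le (by linarith) hk)
        (by positivity)
    _ = 2 * K * ε - K * ε ^ 2 := by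
      field_simp
      ring
    _ ≤ 2 * K * ε := sub_le_self _ (by positivity)

theorem stmt17 (k : ℕ) (hk : 2 ≤ k) (K : ℝ) (hK : 1 ≤ K)
    (C : ℝ → ℝ)
    (hC01 : ∀ ε ∈ Set.Ioc (0 : ℝ) 1, 0 ≤ C ε ∧ C ε ≤ 1)
    (hrec : ∀ ε ∈ Set.Ioo (0 : ℝ) 1, ε / (1 - ε) ≤ 1 →
        C ε ≤ K * ε ^ 2 + (1 - ε) ^ k * C (ε / (1 - ε))) :
    ∀ ε ∈ Set.Ioc (0 : ℝ) 1, C ε ≤ 2 * K * ε := by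
  refine Real.Ioc_zero_one_induction (fun ε ⟨hhalf, hε1⟩ => ?_) fun ε ⟨hε0, hhalf⟩ ih => ?_
  · have hC := (hC01 ε ⟨by linarith, hε1⟩).2
    nlinarith
  · have hε' : ε / (1 - ε) ≤ 1 := by
      rw [div_le_one (by linarith)]
      linarith
    exact le_two_mul_mul_of_le_sq_add_pow_mul hk (by linarith) hε0 (by linarith)
      (hrec ε ⟨hε0, by linarith⟩ hε') ih
end
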